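/- arXiv:1109.4898 — 2 statements merged into one kernel-verified Lean document; each statement's English description precedes it below -/
import Mathlib

section
/- Let 𝕂 be ℝ or ℂ, let 0 < p_1, …, p_n ≤ q ≤ s < ∞, and let E_1, …, E_n, F be Banach spaces over 𝕂. A continuous n-linear operator A : E_1 × ⋯ × E_n → F is multiple (s,q;p_1,…,p_n)-mixing summing if and only if there exists a constant σ ≥ 0 such that (∑_{j_1,…,j_n=1}^m (∑_{j=1}^k |φ_j(A(x_{j_1}^{(1)},…,x_{j_n}^{(n)}))|^s)^{q/s})^{1/q} ≤ σ · ∏_{l=1}^n ‖(x_i^{(l)})_{i=1}^m‖_{w,p_l} · (∑_{j=1}^k ‖φ_j‖^s)^{1/s} for all k, m ∈ ℕ, all x_i^{(l)} ∈ E_l (1 ≤ i ≤ m, 1 ≤ l ≤ n) and all φ_1, …, φ_k ∈ F*. Moreover, ‖A‖_{mx(s,q;p_1,…,p_n)} equals the infimum of all constants σ satisfying this inequality. -/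
/-!
A factorization `z_j = τ_j y_j` bounds the left-hand side of the inequality by
`‖τ‖_ρ ‖y‖_{w,s} (∑ ‖φ_i‖^s)^{1/s}`: Hölder's inequality with exponents `ρ/q` and `s/q`,
together with `∑_j ∑_i |φ_i(y_j)|^s ≤ ‖y‖_{w,s}^s ∑_i ‖φ_i‖^s`. This gives one direction.

Conversely, suppose the inequality holds with constant `C`. A convex combination `∑ w_i P_{ψ_i}` of
the profiles `P_ψ = (|ψ(z_j)|^s)_j`, `‖ψ‖ ≤ 1`, is the sum of the profiles of the functionals
`w_i^{1/s} ψ_i`, so `∑_j v_j^{q/s} ≤ C^q` on the closed convex hull `S` of the profiles. Let `w`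
maximize the concave function `∑_j (v_j + δ)^{q/s}` on the compact set `S`, with value `G`. The
first-order condition at `w` says `∑_j u_j |ψ(z_j)|^s ≤ G` for `u_j = (w_j + δ)^{q/s - 1}` and
all `‖ψ‖ ≤ 1`, and the factorization `z_j = u_j^{-1/s} (u_j^{1/s} z_j)` costs exactly `G^{1/q}`,
which is at most `(C^q + |J| δ^{q/s})^{1/q}`. Letting `δ → 0` gives `‖z‖_{mx(s,q)} ≤ C`.
-/

open scoped BigOperators
noncomputable section

/-- The weak `ℓ^q` norm of a finite family in a normed space:
`sup_{‖φ‖ ≤ 1} (∑_j |φ(x_j)|^q)^{1/q}`. -/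
def weakLpNorm (𝕂 : Type*) [RCLike 𝕂] {E : Type*} [NormedAddCommGroup E] [NormedSpace 𝕂 E]
    {J : Type*} [Fintype J] (q : ℝ) (x : J → E) : ℝ :=
  ⨆ φ : {φ : E →L[𝕂] 𝕂 // ‖φ‖ ≤ 1}, (∑ j, ‖φ.1 (x j)‖ ^ q) ^ (1 / q)

/-- The mixed `(s,q)`-norm of a finite family `z` in `F`:
`inf ‖(τ_j)‖_{ℓ^ρ} ‖(y_j)‖_{w,s}` over factorizations `z_j = τ_j • y_j`, where
`1/ρ = 1/q - 1/s` (so `ρ = ∞`, i.e. the sup norm, when `s = q`). -/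
def mixedNorm (𝕂 : Type*) [RCLike 𝕂] {F : Type*} [NormedAddCommGroup F] [NormedSpace 𝕂 F]
    {J : Type*} [Fintype J] (s q : ℝ) (z : J → F) : ℝ :=
  sInf { c : ℝ | ∃ τ : J → 𝕂, ∃ y : J → F, (∀ j, z j = τ j • y j) ∧
      c = (if s = q then ⨆ j, ‖τ j‖
           else (∑ j, ‖τ j‖ ^ (1 / q - 1 / s)⁻¹) ^ (1 / q - 1 / s)) * weakLpNorm 𝕂 s y }

/-- `A` is multiple `(s,q;p₁,…,pₙ)`-mixing summing. -/
def MultipleMixingSumming (𝕂 : Type*) [RCLike 𝕂] {n : ℕ} {E : Fin n → Type*}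
    [∀ i, NormedAddCommGroup (E i)] [∀ i, NormedSpace 𝕂 (E i)]
    {F : Type*} [NormedAddCommGroup F] [NormedSpace 𝕂 F]
    (s q : ℝ) (p : Fin n → ℝ) (A : ((i : Fin n) → E i) → F) : Prop :=
  ∃ σ : ℝ, 0 ≤ σ ∧ ∀ (m : ℕ) (x : (i : Fin n) → Fin m → E i),
    mixedNorm 𝕂 s q (fun j : Fin n → Fin m => A (fun i => x i (j i))) ≤
      σ * ∏ i, weakLpNorm 𝕂 (p i) (x i)

/-- The multiple `(s,q;p₁,…,pₙ)`-mixing summing norm of `A`. -/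
def mixingNorm (𝕂 : Type*) [RCLike 𝕂] {n : ℕ} {E : Fin n → Type*}
    [∀ i, NormedAddCommGroup (E i)] [∀ i, NormedSpace 𝕂 (E i)]
    {F : Type*} [NormedAddCommGroup F] [NormedSpace 𝕂 F]
    (s q : ℝ) (p : Fin n → ℝ) (A : ((i : Fin n) → E i) → F) : ℝ :=
  sInf { σ : ℝ | 0 ≤ σ ∧ ∀ (m : ℕ) (x : (i : Fin n) → Fin m → E i),
    mixedNorm 𝕂 s q (fun j : Fin n → Fin m => A (fun i => x i (j i))) ≤
      σ * ∏ i, weakLpNorm 𝕂 (p i) (x i) }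

section

variable {𝕂 : Type*} [RCLike 𝕂] {F : Type*} [NormedAddCommGroup F] [NormedSpace 𝕂 F] {J : Type*}

section WeakNorm

variable [Fintype J]

lemma weakLpNorm_nonneg (s : ℝ) (x : J → F) : 0 ≤ weakLpNorm 𝕂 s x :=
  Real.iSup_nonneg fun _ => by positivity

lemma sum_rpow_le_weakLpNorm_rpow {s : ℝ} (hs : 0 < s) (x : J → F) {φ : F →L[𝕂] 𝕂}
    (hφ : ‖φ‖ ≤ 1) : ∑ j, ‖φ (x j)‖ ^ s ≤ weakLpNorm 𝕂 s x ^ s := by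
  have hbdd : BddAbove (Set.range fun ψ : {ψ : F →L[𝕂] 𝕂 // ‖ψ‖ ≤ 1} =>
      (∑ j, ‖ψ.1 (x j)‖ ^ s) ^ (1 / s)) := by
    refine ⟨(∑ j, ‖x j‖ ^ s) ^ (1 / s), ?_⟩
    rintro _ ⟨ψ, rfl⟩
    refine Real.rpow_le_rpow (by positivity) (Finset.sum_le_sum fun j _ => ?_) (by positivity)
    exact Real.rpow_le_rpow (norm_nonneg _)
      (ψ.1.le_of_opNorm_le ψ.2 (x j) |>.trans_eq (one_mul _)) hs.le
  have h : _ ≤ weakLpNorm 𝕂 s x := le_ciSup hbdd ⟨φ, hφ⟩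
  rwa [← Real.rpow_le_rpow_iff (by positivity) (weakLpNorm_nonneg s x) hs,
    ← Real.rpow_mul (by positivity), one_div_mul_cancel hs.ne', Real.rpow_one] at h

lemma sum_rpow_le_norm_rpow_mul_weakLpNorm_rpow {s : ℝ} (hs : 0 < s) (x : J → F)
    (φ : F →L[𝕂] 𝕂) : ∑ j, ‖φ (x j)‖ ^ s ≤ ‖φ‖ ^ s * weakLpNorm 𝕂 s x ^ s := by
  rcases eq_or_ne φ 0 with rfl | hφ
  · simp [Real.zero_rpow hs.ne']
  have hφ₀ : 0 < ‖φ‖ := norm_pos_iff.2 hφ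
  have hψ : ‖((‖φ‖⁻¹ : ℝ) : 𝕂) • φ‖ ≤ 1 := by
    rw [norm_smul, RCLike.norm_ofReal, abs_inv, abs_norm, inv_mul_cancel₀ hφ₀.ne']
  have h := sum_rpow_le_weakLpNorm_rpow hs x hψ
  simp only [smul_apply, norm_smul, RCLike.norm_ofReal, abs_inv, abs_norm,
    Real.mul_rpow (inv_nonneg.2 hφ₀.le) (norm_nonneg _), ← Finset.mul_sum,
    Real.inv_rpow hφ₀.le] at h
  rwa [inv_mul_le_iff₀ (by positivity)] at h

lemma sum_sum_rpow_le {s : ℝ} (hs : 0 < s) {ι : Type*} [Fintype ι] (φ : ι → F →L[𝕂] 𝕂)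
    (x : J → F) :
    ∑ j, ∑ i, ‖φ i (x j)‖ ^ s ≤ weakLpNorm 𝕂 s x ^ s * ∑ i, ‖φ i‖ ^ s := by
  rw [Finset.sum_comm, Finset.mul_sum]
  exact Finset.sum_le_sum fun i _ =>
    (sum_rpow_le_norm_rpow_mul_weakLpNorm_rpow hs x (φ i)).trans_eq (mul_comm _ _)

lemma weakLpNorm_le {s B : ℝ} {x : J → F}
    (h : ∀ ψ : F →L[𝕂] 𝕂, ‖ψ‖ ≤ 1 → (∑ j, ‖ψ (x j)‖ ^ s) ^ (1 / s) ≤ B) :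
    weakLpNorm 𝕂 s x ≤ B :=
  have : Nonempty {ψ : F →L[𝕂] 𝕂 // ‖ψ‖ ≤ 1} := ⟨⟨0, by simp⟩⟩
  ciSup_le fun ψ => h ψ.1 ψ.2

end WeakNorm

section MixedNorm

variable [Fintype J]

def rhoNorm (s q : ℝ) (τ : J → 𝕂) : ℝ :=
  if s = q then ⨆ j, ‖τ j‖ else (∑ j, ‖τ j‖ ^ (1 / q - 1 / s)⁻¹) ^ (1 / q - 1 / s)

lemma rhoNorm_nonneg (s q : ℝ) (τ : J → 𝕂) : 0 ≤ rhoNorm s q τ := by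
  unfold rhoNorm
  split_ifs
  · exact Real.iSup_nonneg fun _ => norm_nonneg _
  · positivity

lemma mixedNorm_le_of_eq_smul {s q : ℝ} {z y : J → F} {τ : J → 𝕂}
    (h : ∀ j, z j = τ j • y j) : mixedNorm 𝕂 s q z ≤ rhoNorm s q τ * weakLpNorm 𝕂 s y := by
  refine csInf_le ⟨0, ?_⟩ ⟨τ, y, h, rfl⟩
  rintro _ ⟨τ, y, -, rfl⟩
  exact mul_nonneg (rhoNorm_nonneg s q τ) (weakLpNorm_nonneg s y)

lemma le_mixedNorm {s q b : ℝ} {z : J → F}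
    (h : ∀ (τ : J → 𝕂) y, (∀ j, z j = τ j • y j) → b ≤ rhoNorm s q τ * weakLpNorm 𝕂 s y) :
    b ≤ mixedNorm 𝕂 s q z := by
  refine le_csInf ⟨_, fun _ => 1, z, fun j => (one_smul 𝕂 (z j)).symm, rfl⟩ ?_
  rintro _ ⟨τ, y, hzy, rfl⟩
  exact h τ y hzy

end MixedNorm

section MixingSum

variable [Fintype J] {ι : Type*} [Fintype ι]

def mixingSum (s q : ℝ) (φ : ι → F →L[𝕂] 𝕂) (z : J → F) : ℝ :=
  (∑ j, (∑ i, ‖φ i (z j)‖ ^ s) ^ (q / s)) ^ (1 / q)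

lemma sum_rpow_apply_smul (s : ℝ) (φ : ι → F →L[𝕂] 𝕂) (τ : 𝕂) (y : F) :
    ∑ i, ‖φ i (τ • y)‖ ^ s = ‖τ‖ ^ s * ∑ i, ‖φ i y‖ ^ s := by
  simp only [map_smul, smul_eq_mul, norm_mul, Real.mul_rpow (norm_nonneg _) (norm_nonneg _),
    Finset.mul_sum]

lemma mixingSum_self_le_of_eq_smul {s : ℝ} (hs : 0 < s) (φ : ι → F →L[𝕂] 𝕂) {z y : J → F}
    {τ : J → 𝕂} (h : ∀ j, z j = τ j • y j) :
    mixingSum s s φ z ≤ (⨆ j, ‖τ j‖) * weakLpNorm 𝕂 s y * (∑ i, ‖φ i‖ ^ s) ^ (1 / s) := by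
  set M := ⨆ j, ‖τ j‖
  have hM : ∀ j, ‖τ j‖ ≤ M := fun j =>
    le_ciSup (f := fun j => ‖τ j‖) (Set.finite_range _).bddAbove j
  have hM₀ : 0 ≤ M := Real.iSup_nonneg fun _ => norm_nonneg _
  have hW₀ := weakLpNorm_nonneg (𝕂 := 𝕂) s y
  calc mixingSum s s φ z = (∑ j, ‖τ j‖ ^ s * ∑ i, ‖φ i (y j)‖ ^ s) ^ (1 / s) := by
        simp only [mixingSum, div_self hs.ne', Real.rpow_one, h, sum_rpow_apply_smul]
    _ ≤ ((M * weakLpNorm 𝕂 s y) ^ s * ∑ i, ‖φ i‖ ^ s) ^ (1 / s) := by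
        gcongr
        calc ∑ j, ‖τ j‖ ^ s * ∑ i, ‖φ i (y j)‖ ^ s
            ≤ ∑ j, M ^ s * ∑ i, ‖φ i (y j)‖ ^ s := by gcongr with j; exact hM j
          _ ≤ M ^ s * (weakLpNorm 𝕂 s y ^ s * ∑ i, ‖φ i‖ ^ s) := by
            rw [← Finset.mul_sum]; gcongr; exact sum_sum_rpow_le hs φ y
          _ = (M * weakLpNorm 𝕂 s y) ^ s * ∑ i, ‖φ i‖ ^ s := by
            rw [Real.mul_rpow hM₀ hW₀]; ring
    _ = M * weakLpNorm 𝕂 s y * (∑ i, ‖φ i‖ ^ s) ^ (1 / s) := by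
        rw [Real.mul_rpow (by positivity) (by positivity), one_div,
          Real.rpow_rpow_inv (by positivity) hs.ne']

lemma mixingSum_le_of_eq_smul_of_lt {s q : ℝ} (hq : 0 < q) (hqs : q < s)
    (φ : ι → F →L[𝕂] 𝕂) {z y : J → F} {τ : J → 𝕂} (h : ∀ j, z j = τ j • y j) :
    mixingSum s q φ z ≤ (∑ j, ‖τ j‖ ^ (1 / q - 1 / s)⁻¹) ^ (1 / q - 1 / s) *
      weakLpNorm 𝕂 s y * (∑ i, ‖φ i‖ ^ s) ^ (1 / s) := by
  have hs : 0 < s := hq.trans hqs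
  set a := 1 / q - 1 / s
  have ha : 0 < a := sub_pos.2 (one_div_lt_one_div_of_lt hq hqs)
  set S : J → ℝ := fun j => ∑ i, ‖φ i (y j)‖ ^ s
  have hS : ∀ j, 0 ≤ S j := fun j => by positivity
  have hconj : Real.HolderConjugate (q * a)⁻¹ (s / q) := by
    refine ⟨?_, by positivity, by positivity⟩
    simp only [a, inv_inv, inv_div]
    field_simp
    ring
  have holder : ∑ j, ‖τ j‖ ^ q * S j ^ (q / s) ≤
      (∑ j, ‖τ j‖ ^ a⁻¹) ^ (q * a) * (∑ j, S j) ^ (q / s) := by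
    have := Real.inner_le_Lp_mul_Lq_of_nonneg Finset.univ hconj
      (fun j _ => Real.rpow_nonneg (norm_nonneg (τ j)) q)
      (fun j _ => Real.rpow_nonneg (hS j) (q / s))
    convert this using 3
    · refine Finset.sum_congr rfl fun j _ => ?_
      rw [← Real.rpow_mul (norm_nonneg _)]
      congr 1
      field_simp
    · simp
    · refine Finset.sum_congr rfl fun j _ => ?_
      rw [← Real.rpow_mul (hS j), show q / s * (s / q) = 1 by field_simp, Real.rpow_one]
    · simp
  calc mixingSum s q φ z = (∑ j, ‖τ j‖ ^ q * S j ^ (q / s)) ^ (1 / q) := by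
        simp only [mixingSum, h, sum_rpow_apply_smul]
        congr 1
        refine Finset.sum_congr rfl fun j _ => ?_
        rw [Real.mul_rpow (by positivity) (hS j), ← Real.rpow_mul (norm_nonneg _),
          mul_div_cancel₀ q hs.ne']
    _ ≤ ((∑ j, ‖τ j‖ ^ a⁻¹) ^ (q * a) *
          (weakLpNorm 𝕂 s y ^ s * ∑ i, ‖φ i‖ ^ s) ^ (q / s)) ^ (1 / q) := by
        gcongr
        exact holder.trans (by gcongr; exact sum_sum_rpow_le hs φ y)
    _ = (∑ j, ‖τ j‖ ^ a⁻¹) ^ a * weakLpNorm 𝕂 s y * (∑ i, ‖φ i‖ ^ s) ^ (1 / s) := by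
        have hW := weakLpNorm_nonneg (𝕂 := 𝕂) s y
        rw [Real.mul_rpow (by positivity) (by positivity), ← Real.rpow_mul (by positivity),
          ← Real.rpow_mul (by positivity), Real.mul_rpow (by positivity) (by positivity),
          ← Real.rpow_mul hW, show q * a * (1 / q) = a by field_simp,
          show q / s * (1 / q) = 1 / s by field_simp, mul_one_div_cancel hs.ne', Real.rpow_one,
          mul_assoc]

lemma mixingSum_le_of_eq_smul {s q : ℝ} (hq : 0 < q) (hqs : q ≤ s) (φ : ι → F →L[𝕂] 𝕂)
    {z y : J → F} {τ : J → 𝕂} (h : ∀ j, z j = τ j • y j) :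
    mixingSum s q φ z ≤ rhoNorm s q τ * weakLpNorm 𝕂 s y * (∑ i, ‖φ i‖ ^ s) ^ (1 / s) := by
  rcases hqs.eq_or_lt with rfl | hlt
  · rw [rhoNorm, if_pos rfl]
    exact mixingSum_self_le_of_eq_smul hq φ h
  · rw [rhoNorm, if_neg hlt.ne']
    exact mixingSum_le_of_eq_smul_of_lt hq hlt φ h

lemma mixingSum_le_mixedNorm_mul {s q : ℝ} (hq : 0 < q) (hqs : q ≤ s) (φ : ι → F →L[𝕂] 𝕂)
    (z : J → F) : mixingSum s q φ z ≤ mixedNorm 𝕂 s q z * (∑ i, ‖φ i‖ ^ s) ^ (1 / s) := by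
  rcases (by positivity : (0 : ℝ) ≤ (∑ i, ‖φ i‖ ^ s) ^ (1 / s)).eq_or_lt with hT | hT
  · have := mixingSum_le_of_eq_smul hq hqs φ (τ := fun _ => 1) (fun j => (one_smul 𝕂 (z j)).symm)
    rwa [← hT, mul_zero] at this ⊢
  · rw [← div_le_iff₀ hT]
    refine le_mixedNorm fun τ y h => ?_
    rw [div_le_iff₀ hT]
    exact mixingSum_le_of_eq_smul hq hqs φ h

end MixingSum

section Factorization

variable [Fintype J]

lemma sum_mul_rpow_le_of_isMaxOn {S : Set (J → ℝ)} (hS : Convex ℝ S) {r δ : ℝ} (hr : 0 < r)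
    {w : J → ℝ} (hw : w ∈ S) (hpos : ∀ j, 0 < w j + δ)
    (hmax : IsMaxOn (fun v => ∑ j, (v j + δ) ^ r) S w) {v : J → ℝ} (hv : v ∈ S) :
    ∑ j, v j * (w j + δ) ^ (r - 1) ≤ ∑ j, w j * (w j + δ) ^ (r - 1) := by
  have hderiv : HasFDerivAt (fun v : J → ℝ => ∑ j, (v j + δ) ^ r)
      (∑ j, (r * (w j + δ) ^ (r - 1)) • ContinuousLinearMap.proj j) w :=
    HasFDerivAt.fun_sum fun j _ =>
      ((hasFDerivAt_apply j w).add_const δ).rpow_const (Or.inl (hpos j).ne')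
  have h := hmax.localize.hasFDerivWithinAt_nonpos hderiv.hasFDerivWithinAt
    (sub_mem_posTangentConeAt_of_segment_subset (hS.segment_subset hw hv))
  simp only [FunLike.coe_sum, Finset.sum_apply, smul_apply,
    ContinuousLinearMap.proj_apply, Pi.sub_apply, smul_eq_mul] at h
  rw [← sub_nonpos, ← Finset.sum_sub_distrib]
  refine nonpos_of_mul_nonpos_left (le_of_eq_of_le ?_ h) hr
  rw [Finset.sum_mul]
  exact Finset.sum_congr rfl fun j _ => by ring

lemma norm_rpow_smul_rpow {s w : ℝ} (hs : s ≠ 0) (hw : 0 ≤ w) {V : Type*}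
    [SeminormedAddCommGroup V] [NormedSpace 𝕂 V] (a : V) :
    ‖((w ^ (1 / s) : ℝ) : 𝕂) • a‖ ^ s = w * ‖a‖ ^ s := by
  rw [norm_smul, RCLike.norm_ofReal, abs_of_nonneg (by positivity),
    Real.mul_rpow (by positivity) (norm_nonneg _), ← Real.rpow_mul hw, one_div_mul_cancel hs,
    Real.rpow_one]

lemma mixedNorm_le_of_weights {s q B : ℝ} (hq : 0 < q) (hqs : q < s) {z : J → F}
    {u : J → ℝ} (hu : ∀ j, 0 < u j)
    (hB : ∀ ψ : F →L[𝕂] 𝕂, ‖ψ‖ ≤ 1 → ∑ j, u j * ‖ψ (z j)‖ ^ s ≤ B) :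
    mixedNorm 𝕂 s q z ≤
      (∑ j, u j ^ (-(1 / s) * (1 / q - 1 / s)⁻¹)) ^ (1 / q - 1 / s) * B ^ (1 / s) := by
  have hs : 0 < s := hq.trans hqs
  have hfactor : ∀ j, z j = ((u j ^ (-(1 / s)) : ℝ) : 𝕂) • ((u j ^ (1 / s) : ℝ) : 𝕂) • z j := by
    intro j
    rw [smul_smul, ← RCLike.ofReal_mul, ← Real.rpow_add (hu j), neg_add_cancel, Real.rpow_zero,
      RCLike.ofReal_one, one_smul]
  refine (mixedNorm_le_of_eq_smul hfactor).trans ?_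
  rw [rhoNorm, if_neg hqs.ne']
  have hu₀ : ∀ j, 0 ≤ u j := fun j => (hu j).le
  refine mul_le_mul (le_of_eq ?_) ?_ (weakLpNorm_nonneg s _)
    (Real.rpow_nonneg (Finset.sum_nonneg fun j _ => Real.rpow_nonneg (hu₀ j) _) _)
  · congr 1
    refine Finset.sum_congr rfl fun j _ => ?_
    rw [RCLike.norm_ofReal, abs_of_nonneg (Real.rpow_nonneg (hu₀ j) _), ← Real.rpow_mul (hu₀ j)]
  · refine weakLpNorm_le fun ψ hψ => ?_
    simp only [map_smul, norm_rpow_smul_rpow hs.ne' (hu₀ _)]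
    exact Real.rpow_le_rpow (Finset.sum_nonneg fun j _ => mul_nonneg (hu₀ j) (by positivity))
      (hB ψ hψ) (by positivity)

end Factorization

section Profiles

variable (𝕂) in
def dualProfiles (s : ℝ) (z : J → F) : Set (J → ℝ) :=
  Set.range fun ψ : {ψ : F →L[𝕂] 𝕂 // ‖ψ‖ ≤ 1} => fun j => ‖ψ.1 (z j)‖ ^ s

lemma closure_convexHull_dualProfiles_subset_pi {s : ℝ} (hs : 0 ≤ s) (z : J → F) :
    closure (convexHull ℝ (dualProfiles 𝕂 s z)) ⊆ Set.univ.pi fun j => Set.Icc 0 (‖z j‖ ^ s) := by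
  refine closure_minimal (convexHull_min ?_ (convex_pi fun _ _ => convex_Icc _ _))
    (isClosed_set_pi fun _ _ => isClosed_Icc)
  rintro _ ⟨ψ, rfl⟩ j -
  exact ⟨by positivity, Real.rpow_le_rpow (norm_nonneg _)
    (ψ.1.le_of_opNorm_le ψ.2 (z j) |>.trans_eq (one_mul _)) hs⟩

end Profiles

section HardDirection

variable [Fintype J]

lemma sum_rpow_le_of_mem_convexHull {s q C : ℝ} (hq : 0 < q) (hqs : q ≤ s) (hC : 0 ≤ C)
    {z : J → F}
    (h : ∀ (k : ℕ) (φ : Fin k → F →L[𝕂] 𝕂), mixingSum s q φ z ≤ C * (∑ i, ‖φ i‖ ^ s) ^ (1 / s))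
    {v : J → ℝ} (hv : v ∈ convexHull ℝ (dualProfiles 𝕂 s z)) :
    ∑ j, v j ^ (q / s) ≤ C ^ q := by
  have hs : 0 < s := hq.trans_le hqs
  obtain ⟨ι, _, w, ζ, hw₀, hw₁, hζ, rfl⟩ := mem_convexHull_iff_exists_fintype.1 hv
  choose ψ hψ using hζ
  let e := (Fintype.equivFin ι).symm
  let φ : Fin (Fintype.card ι) → F →L[𝕂] 𝕂 :=
    fun i => ((w (e i) ^ (1 / s) : ℝ) : 𝕂) • (ψ (e i)).1
  have hT : ∑ i, ‖φ i‖ ^ s ≤ 1 :=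
    calc ∑ i, ‖φ i‖ ^ s = ∑ i, w (e i) * ‖(ψ (e i)).1‖ ^ s :=
          Finset.sum_congr rfl fun i _ => norm_rpow_smul_rpow hs.ne' (hw₀ (e i)) (ψ (e i)).1
      _ ≤ ∑ i, w (e i) := by
          gcongr with i
          exact mul_le_of_le_one_right (hw₀ _) (Real.rpow_le_one (norm_nonneg _) (ψ _).2 hs.le)
      _ = 1 := by rw [e.sum_comp w, hw₁]
  have hprofile : ∀ j, ∑ i, ‖φ i (z j)‖ ^ s = (∑ a, w a • ζ a) j := by
    intro j
    calc ∑ i, ‖φ i (z j)‖ ^ s = ∑ i, w (e i) * ‖(ψ (e i)).1 (z j)‖ ^ s :=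
          Finset.sum_congr rfl fun i _ => by
            rw [smul_apply]; exact norm_rpow_smul_rpow hs.ne' (hw₀ (e i)) ((ψ (e i)).1 (z j))
      _ = (∑ a, w a • ζ a) j := by
          simp only [e.sum_comp fun a => w a * ‖(ψ a).1 (z j)‖ ^ s, Finset.sum_apply,
            Pi.smul_apply, smul_eq_mul, ← hψ]
  have hφ := (h _ φ).trans
    (mul_le_of_le_one_right hC (Real.rpow_le_one (by positivity) hT (one_div_nonneg.2 hs.le)))
  rw [mixingSum, one_div, Real.rpow_inv_le_iff_of_pos (by positivity) hC hq] at hφ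
  simpa only [hprofile] using hφ

lemma mixedNorm_le_of_isMaxOn {s q δ : ℝ} (hq : 0 < q) (hqs : q < s) (hδ : 0 < δ)
    {z : J → F} {w : J → ℝ} (hw : w ∈ closure (convexHull ℝ (dualProfiles 𝕂 s z)))
    (hw₀ : ∀ j, 0 ≤ w j)
    (hmax : IsMaxOn (fun v => ∑ j, (v j + δ) ^ (q / s))
      (closure (convexHull ℝ (dualProfiles 𝕂 s z))) w) :
    mixedNorm 𝕂 s q z ≤ (∑ j, (w j + δ) ^ (q / s)) ^ (1 / q) := by
  have hs : 0 < s := hq.trans hqs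
  have hpos : ∀ j, 0 < w j + δ := fun j => add_pos_of_nonneg_of_pos (hw₀ j) hδ
  set G := ∑ j, (w j + δ) ^ (q / s)
  have hG : 0 ≤ G := Finset.sum_nonneg fun j _ => (Real.rpow_pos_of_pos (hpos j) _).le
  have hB : ∀ ψ : F →L[𝕂] 𝕂, ‖ψ‖ ≤ 1 → ∑ j, (w j + δ) ^ (q / s - 1) * ‖ψ (z j)‖ ^ s ≤ G := by
    intro ψ hψ
    have hfoc := sum_mul_rpow_le_of_isMaxOn (convex_convexHull ℝ _).closure (div_pos hq hs) hw
      hpos hmax (subset_closure (subset_convexHull ℝ _ ⟨⟨ψ, hψ⟩, rfl⟩))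
    calc ∑ j, (w j + δ) ^ (q / s - 1) * ‖ψ (z j)‖ ^ s
        ≤ ∑ j, w j * (w j + δ) ^ (q / s - 1) := by simpa only [mul_comm] using hfoc
      _ ≤ ∑ j, (w j + δ) ^ (q / s - 1) * (w j + δ) := by
        refine Finset.sum_le_sum fun j _ => ?_
        rw [mul_comm]
        exact mul_le_mul_of_nonneg_left (by linarith) (Real.rpow_nonneg (hpos j).le _)
      _ = G := by simp only [← Real.rpow_add_one (hpos _).ne', sub_add_cancel, G]
  calc mixedNorm 𝕂 s q z
      ≤ (∑ j, ((w j + δ) ^ (q / s - 1)) ^ (-(1 / s) * (1 / q - 1 / s)⁻¹)) ^ (1 / q - 1 / s) *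
          G ^ (1 / s) :=
        mixedNorm_le_of_weights hq hqs (fun j => Real.rpow_pos_of_pos (hpos j) _) hB
    _ = G ^ (1 / q - 1 / s) * G ^ (1 / s) := by
        have hsq : s - q ≠ 0 := sub_ne_zero.2 hqs.ne'
        congr 2
        refine Finset.sum_congr rfl fun j _ => ?_
        rw [← Real.rpow_mul (hpos j).le]
        congr 1
        field_simp
        ring
    _ = G ^ (1 / q) := by
        rw [← Real.rpow_add' hG (by simpa using hq.ne'), sub_add_cancel]

lemma mixedNorm_le_of_convexHull {s q C δ : ℝ} (hq : 0 < q) (hqs : q < s) (hδ : 0 < δ)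
    {z : J → F} (h : ∀ v ∈ convexHull ℝ (dualProfiles 𝕂 s z), ∑ j, v j ^ (q / s) ≤ C ^ q) :
    mixedNorm 𝕂 s q z ≤ (C ^ q + Fintype.card J * δ ^ (q / s)) ^ (1 / q) := by
  have hs : 0 < s := hq.trans hqs
  have hr : 0 < q / s := div_pos hq hs
  have hpi := closure_convexHull_dualProfiles_subset_pi (𝕂 := 𝕂) hs.le z
  have hcompact := (isCompact_univ_pi fun j => isCompact_Icc).of_isClosed_subset
    isClosed_closure hpi
  have hcont : Continuous fun v : J → ℝ => ∑ j, (v j + δ) ^ (q / s) := by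
    fun_prop (disch := exact hr.le)
  obtain ⟨w, hw, hmax⟩ := hcompact.exists_isMaxOn
    ⟨_, subset_closure (subset_convexHull ℝ _ ⟨⟨0, by simp⟩, rfl⟩)⟩ hcont.continuousOn
  have hw₀ : ∀ j, 0 ≤ w j := fun j => (hpi hw j trivial).1
  refine (mixedNorm_le_of_isMaxOn hq hqs hδ hw hw₀ hmax).trans (Real.rpow_le_rpow
    (Finset.sum_nonneg fun j _ => Real.rpow_nonneg (add_nonneg (hw₀ j) hδ.le) _) ?_
    (one_div_nonneg.2 hq.le))
  calc ∑ j, (w j + δ) ^ (q / s) ≤ ∑ j, (w j ^ (q / s) + δ ^ (q / s)) := by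
        gcongr with j
        exact Real.rpow_add_le_add_rpow (hw₀ j) hδ.le hr.le ((div_le_one hs).2 hqs.le)
    _ ≤ C ^ q + Fintype.card J * δ ^ (q / s) := by
        rw [Finset.sum_add_distrib, Finset.sum_const, Finset.card_univ, nsmul_eq_mul]
        gcongr
        have hcont : Continuous fun v : J → ℝ => ∑ j, v j ^ (q / s) := by
          fun_prop (disch := exact hr.le)
        exact closure_minimal h (isClosed_le hcont continuous_const) hw

lemma mixedNorm_self_le_of_mixingSum_le {s C : ℝ} (hs : 0 < s) (hC : 0 ≤ C) {z : J → F}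
    (h : ∀ (k : ℕ) (φ : Fin k → F →L[𝕂] 𝕂), mixingSum s s φ z ≤ C * (∑ i, ‖φ i‖ ^ s) ^ (1 / s)) :
    mixedNorm 𝕂 s s z ≤ C := by
  have hρ : rhoNorm s s (fun _ : J => (1 : 𝕂)) ≤ 1 := by
    rw [rhoNorm, if_pos rfl]
    exact Real.iSup_le (fun _ => norm_one.le) zero_le_one
  have hW : weakLpNorm 𝕂 s z ≤ C := weakLpNorm_le fun ψ hψ => by
    have hψz := h 1 fun _ => ψ
    simp only [mixingSum, Fin.sum_univ_one, div_self hs.ne', Real.rpow_one] at hψz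
    rw [← Real.rpow_mul (norm_nonneg _), mul_one_div_cancel hs.ne', Real.rpow_one] at hψz
    exact hψz.trans (mul_le_of_le_one_right hC hψ)
  calc mixedNorm 𝕂 s s z ≤ rhoNorm s s (fun _ : J => (1 : 𝕂)) * weakLpNorm 𝕂 s z :=
        mixedNorm_le_of_eq_smul fun j => (one_smul 𝕂 (z j)).symm
    _ ≤ 1 * C := mul_le_mul hρ hW (weakLpNorm_nonneg s z) zero_le_one
    _ = C := one_mul C

lemma mixedNorm_le_of_mixingSum_le_of_lt {s q C : ℝ} (hq : 0 < q) (hqs : q < s) (hC : 0 ≤ C)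
    {z : J → F}
    (h : ∀ (k : ℕ) (φ : Fin k → F →L[𝕂] 𝕂), mixingSum s q φ z ≤ C * (∑ i, ‖φ i‖ ^ s) ^ (1 / s)) :
    mixedNorm 𝕂 s q z ≤ C := by
  have hr : 0 < q / s := div_pos hq (hq.trans hqs)
  have hcont : Continuous fun δ : ℝ => (C ^ q + Fintype.card J * δ ^ (q / s)) ^ (1 / q) := by
    fun_prop (disch := first | exact hr.le | exact (one_div_pos.2 hq).le)
  have hlim := hcont.tendsto 0
  rw [Real.zero_rpow hr.ne', mul_zero, add_zero, ← Real.rpow_mul hC, mul_one_div_cancel hq.ne',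
    Real.rpow_one] at hlim
  exact ge_of_tendsto (hlim.mono_left (nhdsWithin_le_nhds (s := Set.Ioi 0))) <|
    eventually_nhdsWithin_of_forall fun δ hδ => mixedNorm_le_of_convexHull hq hqs hδ
      fun v hv => sum_rpow_le_of_mem_convexHull hq hqs.le hC h hv

theorem mixedNorm_le_iff {s q C : ℝ} (hq : 0 < q) (hqs : q ≤ s) (hC : 0 ≤ C) (z : J → F) :
    mixedNorm 𝕂 s q z ≤ C ↔
      ∀ (k : ℕ) (φ : Fin k → F →L[𝕂] 𝕂), mixingSum s q φ z ≤ C * (∑ i, ‖φ i‖ ^ s) ^ (1 / s) := by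
  refine ⟨fun hz k φ => (mixingSum_le_mixedNorm_mul hq hqs φ z).trans (by gcongr), fun h => ?_⟩
  rcases hqs.eq_or_lt with rfl | hlt
  · exact mixedNorm_self_le_of_mixingSum_le hq hC h
  · exact mixedNorm_le_of_mixingSum_le_of_lt hq hlt hC h

end HardDirection

theorem forall_mixedNorm_le_iff {n : ℕ} {E : Fin n → Type*} [∀ i, NormedAddCommGroup (E i)]
    [∀ i, NormedSpace 𝕂 (E i)] (A : ((i : Fin n) → E i) → F) (p : Fin n → ℝ) {s q σ : ℝ}
    (hq : 0 < q) (hqs : q ≤ s) (hσ : 0 ≤ σ) :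
    (∀ (m : ℕ) (x : (i : Fin n) → Fin m → E i),
      mixedNorm 𝕂 s q (fun j : Fin n → Fin m => A (fun i => x i (j i))) ≤
        σ * ∏ i, weakLpNorm 𝕂 (p i) (x i)) ↔
    ∀ (k m : ℕ) (x : (i : Fin n) → Fin m → E i) (φ : Fin k → F →L[𝕂] 𝕂),
      mixingSum s q φ (fun j : Fin n → Fin m => A (fun i => x i (j i))) ≤
        σ * (∏ i, weakLpNorm 𝕂 (p i) (x i)) * (∑ i, ‖φ i‖ ^ s) ^ (1 / s) := by
  have hC : ∀ (m : ℕ) (x : (i : Fin n) → Fin m → E i), 0 ≤ σ * ∏ i, weakLpNorm 𝕂 (p i) (x i) :=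
    fun m x => mul_nonneg hσ (Finset.prod_nonneg fun i _ => weakLpNorm_nonneg _ _)
  exact ⟨fun h k m x φ => (mixedNorm_le_iff hq hqs (hC m x) _).1 (h m x) k φ,
    fun h m x => (mixedNorm_le_iff hq hqs (hC m x) _).2 fun k φ => h k m x φ⟩

end

theorem multipleMixingSumming_iff_inequality_general
    {𝕂 : Type*} [RCLike 𝕂] {n : ℕ} (hn : 1 ≤ n)
    (s q : ℝ) (p : Fin n → ℝ) (hp : ∀ l, 0 < p l) (hpq : ∀ l, p l ≤ q) (hqs : q ≤ s)
    (E : Fin n → Type*) [∀ i, NormedAddCommGroup (E i)] [∀ i, NormedSpace 𝕂 (E i)]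
    (F : Type*) [NormedAddCommGroup F] [NormedSpace 𝕂 F]
    (A : ContinuousMultilinearMap 𝕂 E F) :
    (MultipleMixingSumming 𝕂 s q p (⇑A) ↔
      ∃ σ : ℝ, 0 ≤ σ ∧ ∀ (k m : ℕ) (x : (l : Fin n) → Fin m → E l)
          (φ : Fin k → (F →L[𝕂] 𝕂)),
        (∑ j : Fin n → Fin m,
            (∑ i : Fin k, ‖φ i (A (fun l => x l (j l)))‖ ^ s) ^ (q / s)) ^ (1 / q) ≤
          σ * (∏ l, weakLpNorm 𝕂 (p l) (x l)) * (∑ i : Fin k, ‖φ i‖ ^ s) ^ (1 / s)) ∧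
    mixingNorm 𝕂 s q p (⇑A) =
      sInf { σ : ℝ | 0 ≤ σ ∧ ∀ (k m : ℕ) (x : (l : Fin n) → Fin m → E l)
          (φ : Fin k → (F →L[𝕂] 𝕂)),
        (∑ j : Fin n → Fin m,
            (∑ i : Fin k, ‖φ i (A (fun l => x l (j l)))‖ ^ s) ^ (q / s)) ^ (1 / q) ≤
          σ * (∏ l, weakLpNorm 𝕂 (p l) (x l)) * (∑ i : Fin k, ‖φ i‖ ^ s) ^ (1 / s) } := by
  have hq : 0 < q := (hp ⟨0, hn⟩).trans_le (hpq ⟨0, hn⟩)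
  exact ⟨exists_congr fun σ => and_congr_right (forall_mixedNorm_le_iff (⇑A) p hq hqs),
    congrArg sInf (Set.ext fun σ => and_congr_right (forall_mixedNorm_le_iff (⇑A) p hq hqs))⟩

/-- Theorem `criterio`: characterization of multiple
`(s,q;p₁,…,pₙ)`-mixing summing operators by an inequality, together with the
identification of the mixing norm as the infimum of the admissible constants. -/
theorem multipleMixingSumming_iff_inequality
    {𝕂 : Type*} [RCLike 𝕂] {n : ℕ} (hn : 1 ≤ n)
    (s q : ℝ) (p : Fin n → ℝ) (hp : ∀ l, 0 < p l) (hpq : ∀ l, p l ≤ q) (hqs : q ≤ s)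
    (E : Fin n → Type*) [∀ i, NormedAddCommGroup (E i)] [∀ i, NormedSpace 𝕂 (E i)]
    [∀ i, CompleteSpace (E i)]
    (F : Type*) [NormedAddCommGroup F] [NormedSpace 𝕂 F] [CompleteSpace F]
    (A : ContinuousMultilinearMap 𝕂 E F) :
    (MultipleMixingSumming 𝕂 s q p (⇑A) ↔
      ∃ σ : ℝ, 0 ≤ σ ∧ ∀ (k m : ℕ) (x : (l : Fin n) → Fin m → E l)
          (φ : Fin k → (F →L[𝕂] 𝕂)),
        (∑ j : Fin n → Fin m,
            (∑ i : Fin k, ‖φ i (A (fun l => x l (j l)))‖ ^ s) ^ (q / s)) ^ (1 / q) ≤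
          σ * (∏ l, weakLpNorm 𝕂 (p l) (x l)) * (∑ i : Fin k, ‖φ i‖ ^ s) ^ (1 / s)) ∧
    mixingNorm 𝕂 s q p (⇑A) =
      sInf { σ : ℝ | 0 ≤ σ ∧ ∀ (k m : ℕ) (x : (l : Fin n) → Fin m → E l)
          (φ : Fin k → (F →L[𝕂] 𝕂)),
        (∑ j : Fin n → Fin m,
            (∑ i : Fin k, ‖φ i (A (fun l => x l (j l)))‖ ^ s) ^ (q / s)) ^ (1 / q) ≤
          σ * (∏ l, weakLpNorm 𝕂 (p l) (x l)) * (∑ i : Fin k, ‖φ i‖ ^ s) ^ (1 / s) } :=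
  multipleMixingSumming_iff_inequality_general hn s q p hp hpq hqs E F A
end
end

section
/- Let 𝕂 be ℝ or ℂ, let 1 ≤ p, p_1, …, p_n < ∞ and 1 ≤ r < ∞, and let E_1, …, E_n, F be Banach spaces over 𝕂. Let A : E_1 × ⋯ × E_n → F be a continuous n-linear operator such that for every Banach space G over 𝕂 and every absolutely r-summing linear operator u : F → G, the composition u ∘ A is multiple (p;p_1,…,p_n)-summing. Then there exists a constant C ≥ 0 (depending only on A) such that ‖u ∘ A‖_{mas(p;p_1,…,p_n)} ≤ C · π_r(u) for every Banach space G over 𝕂 and every absolutely r-summing linear operator u : F → G. -/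
open scoped BigOperators ENNReal NNReal
noncomputable section

/-- `T` is multiple `(p;p₁,…,pₙ)`-summing. -/
def MultipleSumming (𝕂 : Type*) [RCLike 𝕂] {n : ℕ} {E : Fin n → Type*}
    [∀ i, NormedAddCommGroup (E i)] [∀ i, NormedSpace 𝕂 (E i)]
    {G : Type*} [NormedAddCommGroup G] [NormedSpace 𝕂 G]
    (p : ℝ) (q : Fin n → ℝ) (T : ((i : Fin n) → E i) → G) : Prop :=
  ∃ C : ℝ, 0 ≤ C ∧ ∀ (m : ℕ) (x : (i : Fin n) → Fin m → E i),
    (∑ j : Fin n → Fin m, ‖T (fun i => x i (j i))‖ ^ p) ^ (1 / p) ≤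
      C * ∏ i, weakLpNorm 𝕂 (q i) (x i)

/-- The multiple `(p;p₁,…,pₙ)`-summing norm of `T`: the infimum of the admissible
constants. -/
def masNorm (𝕂 : Type*) [RCLike 𝕂] {n : ℕ} {E : Fin n → Type*}
    [∀ i, NormedAddCommGroup (E i)] [∀ i, NormedSpace 𝕂 (E i)]
    {G : Type*} [NormedAddCommGroup G] [NormedSpace 𝕂 G]
    (p : ℝ) (q : Fin n → ℝ) (T : ((i : Fin n) → E i) → G) : ℝ :=
  sInf { C : ℝ | 0 ≤ C ∧ ∀ (m : ℕ) (x : (i : Fin n) → Fin m → E i),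
    (∑ j : Fin n → Fin m, ‖T (fun i => x i (j i))‖ ^ p) ^ (1 / p) ≤
      C * ∏ i, weakLpNorm 𝕂 (q i) (x i) }

/-- `u` is an absolutely `r`-summing linear operator. -/
def AbsolutelySummingOp (𝕂 : Type*) [RCLike 𝕂] {F G : Type*}
    [NormedAddCommGroup F] [NormedSpace 𝕂 F] [NormedAddCommGroup G] [NormedSpace 𝕂 G]
    (r : ℝ) (u : F →L[𝕂] G) : Prop :=
  ∃ C : ℝ, 0 ≤ C ∧ ∀ (k : ℕ) (y : Fin k → F),
    (∑ j : Fin k, ‖u (y j)‖ ^ r) ^ (1 / r) ≤ C * weakLpNorm 𝕂 r y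

/-- The absolutely `r`-summing norm `π_r(u)`. -/
def piNorm (𝕂 : Type*) [RCLike 𝕂] {F G : Type*}
    [NormedAddCommGroup F] [NormedSpace 𝕂 F] [NormedAddCommGroup G] [NormedSpace 𝕂 G]
    (r : ℝ) (u : F →L[𝕂] G) : ℝ :=
  sInf { C : ℝ | 0 ≤ C ∧ ∀ (k : ℕ) (y : Fin k → F),
    (∑ j : Fin k, ‖u (y j)‖ ^ r) ^ (1 / r) ≤ C * weakLpNorm 𝕂 r y }

universe uG

section Aux

variable {𝕂 : Type*} [RCLike 𝕂]

lemma weakLpNorm_nonneg_s9 {E : Type*} [NormedAddCommGroup E] [NormedSpace 𝕂 E]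
    {J : Type*} [Fintype J] (q : ℝ) (x : J → E) : 0 ≤ weakLpNorm 𝕂 q x :=
  Real.iSup_nonneg fun _ => Real.rpow_nonneg
    (Finset.sum_nonneg fun _ _ => Real.rpow_nonneg (norm_nonneg _) _) _

lemma weakLpNorm_single_le {E : Type*} [NormedAddCommGroup E] [NormedSpace 𝕂 E]
    {q : ℝ} (hq : q ≠ 0) (y : E) : weakLpNorm 𝕂 q (fun _ : Fin 1 => y) ≤ ‖y‖ := by
  refine Real.iSup_le (fun φ => ?_) (norm_nonneg y)
  rw [Fin.sum_univ_one, one_div, Real.rpow_rpow_inv (norm_nonneg _) hq]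
  calc ‖φ.1 y‖ ≤ ‖φ.1‖ * ‖y‖ := φ.1.le_opNorm y
    _ ≤ 1 * ‖y‖ := mul_le_mul_of_nonneg_right φ.2 (norm_nonneg y)
    _ = ‖y‖ := one_mul _

lemma op_norm_bound {F G : Type*} [NormedAddCommGroup F] [NormedSpace 𝕂 F]
    [NormedAddCommGroup G] [NormedSpace 𝕂 G] {r : ℝ} (hr : r ≠ 0)
    (u : F →L[𝕂] G) {B : ℝ} (hB0 : 0 ≤ B)
    (hB : ∀ (k : ℕ) (y : Fin k → F),
      (∑ j : Fin k, ‖u (y j)‖ ^ r) ^ (1 / r) ≤ B * weakLpNorm 𝕂 r y)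
    (y : F) : ‖u y‖ ≤ B * ‖y‖ := by
  have h1 := hB 1 (fun _ => y)
  rw [Fin.sum_univ_one, one_div, Real.rpow_rpow_inv (norm_nonneg _) hr] at h1
  exact h1.trans (mul_le_mul_of_nonneg_left (weakLpNorm_single_le hr y) hB0)

lemma piNorm_nonneg {F G : Type*} [NormedAddCommGroup F] [NormedSpace 𝕂 F]
    [NormedAddCommGroup G] [NormedSpace 𝕂 G] (r : ℝ) (u : F →L[𝕂] G) :
    0 ≤ piNorm 𝕂 r u := by
  unfold piNorm; exact Real.sInf_nonneg fun b hb => hb.1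

lemma piNorm_le_of_adm {F G : Type*} [NormedAddCommGroup F] [NormedSpace 𝕂 F]
    [NormedAddCommGroup G] [NormedSpace 𝕂 G] {r : ℝ} {u : F →L[𝕂] G} {C : ℝ} (hC : 0 ≤ C)
    (h : ∀ (k : ℕ) (y : Fin k → F),
      (∑ j : Fin k, ‖u (y j)‖ ^ r) ^ (1 / r) ≤ C * weakLpNorm 𝕂 r y) :
    piNorm 𝕂 r u ≤ C := by
  unfold piNorm; exact csInf_le ⟨0, fun b hb => hb.1⟩ ⟨hC, h⟩

lemma exists_adm_lt {F G : Type*} [NormedAddCommGroup F] [NormedSpace 𝕂 F]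
    [NormedAddCommGroup G] [NormedSpace 𝕂 G] {r : ℝ} {u : F →L[𝕂] G}
    (hu : AbsolutelySummingOp 𝕂 r u) {b : ℝ} (hb : piNorm 𝕂 r u < b) :
    ∃ B, 0 ≤ B ∧ (∀ (k : ℕ) (y : Fin k → F),
      (∑ j : Fin k, ‖u (y j)‖ ^ r) ^ (1 / r) ≤ B * weakLpNorm 𝕂 r y) ∧ B < b := by
  unfold piNorm at hb
  obtain ⟨B, hBmem, hBlt⟩ := exists_lt_of_csInf_lt hu hb
  exact ⟨B, hBmem.1, hBmem.2, hBlt⟩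

lemma masNorm_le_of_adm {n : ℕ} {E : Fin n → Type*}
    [∀ i, NormedAddCommGroup (E i)] [∀ i, NormedSpace 𝕂 (E i)]
    {G : Type*} [NormedAddCommGroup G] [NormedSpace 𝕂 G]
    {p : ℝ} {q : Fin n → ℝ} {T : ((i : Fin n) → E i) → G} {C : ℝ} (hC : 0 ≤ C)
    (h : ∀ (m : ℕ) (x : (i : Fin n) → Fin m → E i),
      (∑ j : Fin n → Fin m, ‖T (fun i => x i (j i))‖ ^ p) ^ (1 / p) ≤
        C * ∏ i, weakLpNorm 𝕂 (q i) (x i)) :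
    masNorm 𝕂 p q T ≤ C := by
  unfold masNorm; exact csInf_le ⟨0, fun b hb => hb.1⟩ ⟨hC, h⟩

lemma le_masNorm {n : ℕ} {E : Fin n → Type*}
    [∀ i, NormedAddCommGroup (E i)] [∀ i, NormedSpace 𝕂 (E i)]
    {G : Type*} [NormedAddCommGroup G] [NormedSpace 𝕂 G]
    {p : ℝ} {q : Fin n → ℝ} {T : ((i : Fin n) → E i) → G} {a : ℝ}
    (hne : MultipleSumming 𝕂 p q T)
    (H : ∀ C, 0 ≤ C → (∀ (m : ℕ) (x : (i : Fin n) → Fin m → E i),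
      (∑ j : Fin n → Fin m, ‖T (fun i => x i (j i))‖ ^ p) ^ (1 / p) ≤
        C * ∏ i, weakLpNorm 𝕂 (q i) (x i)) → a ≤ C) :
    a ≤ masNorm 𝕂 p q T := by
  unfold masNorm; exact le_csInf hne fun C hC => H C hC.1 hC.2

end Aux

set_option maxHeartbeats 1000000 in
set_option maxRecDepth 8000 in
/-- Lemma `jlk`: if `u ∘ A` is multiple `(p;p₁,…,pₙ)`-summing for every
absolutely `r`-summing operator `u : F → G` (any Banach `G`), then there is a constant
`C ≥ 0` with `‖u ∘ A‖ ≤ C · π_r(u)` for all such `u`. -/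
theorem masNorm_le_of_comp_summing
    {𝕂 : Type*} [RCLike 𝕂] {n : ℕ} (hn : 1 ≤ n)
    (p r : ℝ) (p' : Fin n → ℝ) (hp : 1 ≤ p) (hp' : ∀ i, 1 ≤ p' i) (hr : 1 ≤ r)
    (E : Fin n → Type*) [∀ i, NormedAddCommGroup (E i)] [∀ i, NormedSpace 𝕂 (E i)]
    [∀ i, CompleteSpace (E i)]
    (F : Type*) [NormedAddCommGroup F] [NormedSpace 𝕂 F] [CompleteSpace F]
    (A : ContinuousMultilinearMap 𝕂 E F)
    (h : ∀ (G : Type uG) [NormedAddCommGroup G] [NormedSpace 𝕂 G] [CompleteSpace G]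
      (u : F →L[𝕂] G), AbsolutelySummingOp 𝕂 r u →
        MultipleSumming 𝕂 p p' (fun x => u (A x))) :
    ∃ C : ℝ, 0 ≤ C ∧
      ∀ (G : Type uG) [NormedAddCommGroup G] [NormedSpace 𝕂 G] [CompleteSpace G]
        (u : F →L[𝕂] G), AbsolutelySummingOp 𝕂 r u →
          masNorm 𝕂 p p' (fun x => u (A x)) ≤ C * piNorm 𝕂 r u := by
  have hppos : (0:ℝ) < p := lt_of_lt_of_le one_pos hp
  have hp0 : p ≠ 0 := hppos.ne'
  have hrpos : (0:ℝ) < r := lt_of_lt_of_le one_pos hr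
  have hr0 : r ≠ 0 := hrpos.ne'
  by_contra hcon
  push_neg at hcon
  choose G iG insG icsG u habs hlt using fun k : ℕ => hcon ((4:ℝ)^k) (by positivity)
  letI := iG
  letI := insG
  letI := icsG
  -- nonnegativity of piNorm
  have hpiNN : ∀ k, 0 ≤ piNorm 𝕂 r (u k) := by
    intro k
    exact piNorm_nonneg r (u k)
  -- positivity of piNorm of each counterexample
  have hpos : ∀ k, 0 < piNorm 𝕂 r (u k) := by
    intro k
    rcases (hpiNN k).lt_or_eq with hlt0 | heq0
    · exact hlt0
    · exfalso
      -- u k = 0, hence masNorm = 0, contradicting hlt k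
      have hz : ∀ z, ‖u k z‖ ≤ 0 := by
        intro z
        refine le_of_forall_pos_le_add fun ε hε => ?_
        rw [zero_add]
        obtain ⟨B, hB0, hBadm, hBsm⟩ :=
          exists_adm_lt (habs k)
            (show piNorm 𝕂 r (u k) < ε / (‖z‖ + 1) from by
              rw [← heq0]; positivity)
        have h1 : ‖u k z‖ ≤ B * ‖z‖ := op_norm_bound hr0 (u k) hB0 hBadm z
        have h2 : B * ‖z‖ ≤ ε / (‖z‖ + 1) * ‖z‖ :=
          mul_le_mul_of_nonneg_right hBsm.le (norm_nonneg z)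
        have h3 : ε / (‖z‖ + 1) * ‖z‖ ≤ ε := by
          rw [div_mul_eq_mul_div, div_le_iff₀ (by positivity)]
          nlinarith [norm_nonneg z, hε.le]
        linarith
      have hmas : masNorm 𝕂 p p' (fun x => (u k) (A x)) ≤ 0 := by
        apply masNorm_le_of_adm le_rfl
        intro m x
        have hz' : ∀ z, u k (A z) = 0 := fun z => norm_le_zero_iff.mp (hz (A z))
        simp [hz', Real.zero_rpow hp0, Real.zero_rpow (one_div_ne_zero hp0), Real.zero_rpow (inv_ne_zero hp0)]
      have := hlt k
      rw [← heq0, mul_zero] at this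
      linarith
  -- choose near-optimal admissible constants B k
  have hBex : ∀ k, ∃ B, (0 ≤ B ∧ ∀ (m : ℕ) (y : Fin m → F),
      (∑ j : Fin m, ‖u k (y j)‖ ^ r) ^ (1 / r) ≤ B * weakLpNorm 𝕂 r y) ∧
      B < 2 * piNorm 𝕂 r (u k) := by
    intro k
    obtain ⟨B, hB0, hBadm, hBlt⟩ :=
      exists_adm_lt (habs k)
        (show piNorm 𝕂 r (u k) < 2 * piNorm 𝕂 r (u k) from by linarith [hpos k])
    exact ⟨B, ⟨hB0, hBadm⟩, hBlt⟩
  choose B hBmem hBlt2 using hBex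
  have hBpos : ∀ k, 0 < B k := by
    intro k
    have h1 : piNorm 𝕂 r (u k) ≤ B k := piNorm_le_of_adm (hBmem k).1 (hBmem k).2
    exact (hpos k).trans_le h1
  -- the scaling constants
  set c : ℕ → ℝ := fun k => (1/2 : ℝ)^k / B k with hc
  have hcpos : ∀ k, 0 < c k := fun k => div_pos (by positivity) (hBpos k)
  have hcB : ∀ k, c k * B k = (1/2 : ℝ)^k := fun k => div_mul_cancel₀ _ (hBpos k).ne'
  have hub : ∀ k y, ‖u k y‖ ≤ B k * ‖y‖ := fun k =>
    op_norm_bound hr0 (u k) (hBmem k).1 (hBmem k).2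
  have hhalf : ∀ k : ℕ, ((1/2 : ℝ))^k ≤ 1 := fun k => pow_le_one₀ (by norm_num) (by norm_num)
  have hcoord : ∀ (k : ℕ) (y : F), ‖((c k : 𝕂)) • u k y‖ ≤ (1/2 : ℝ)^k * ‖y‖ := by
    intro k y
    calc ‖((c k : 𝕂)) • u k y‖ = c k * ‖u k y‖ := by
          rw [norm_smul, RCLike.norm_ofReal, abs_of_nonneg (hcpos k).le]
      _ ≤ c k * (B k * ‖y‖) := mul_le_mul_of_nonneg_left (hub k y) (hcpos k).le
      _ = (1/2 : ℝ)^k * ‖y‖ := by rw [← mul_assoc, hcB k]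
  -- the amalgamated operator into the ℓ∞-sum
  haveI : Fact ((1 : ℝ≥0∞) ≤ ∞) := ⟨le_top⟩
  have hmem : ∀ y : F, Memℓp (fun k => ((c k : 𝕂)) • u k y) ∞ := by
    intro y
    apply memℓp_infty
    refine ⟨‖y‖, ?_⟩
    rintro s ⟨k, rfl⟩
    exact (hcoord k y).trans (mul_le_of_le_one_left (norm_nonneg y) (hhalf k))
  let U₀ : F →ₗ[𝕂] lp (fun k => G k) ∞ :=
    { toFun := fun y => ⟨fun k => ((c k : 𝕂)) • u k y, hmem y⟩
      map_add' := by
        intro y z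
        apply Subtype.ext
        funext k
        show ((c k : 𝕂)) • u k (y + z) =
          ((c k : 𝕂)) • u k y + ((c k : 𝕂)) • u k z
        rw [map_add, smul_add]
      map_smul' := by
        intro a y
        apply Subtype.ext
        funext k
        show ((c k : 𝕂)) • u k (a • y) = a • (((c k : 𝕂)) • u k y)
        rw [map_smul, smul_comm] }
  have hU₀bound : ∀ y : F, ‖U₀ y‖ ≤ 1 * ‖y‖ := by
    intro y
    rw [one_mul]
    apply lp.norm_le_of_forall_le (norm_nonneg y)
    intro k
    exact (hcoord k y).trans (mul_le_of_le_one_left (norm_nonneg y) (hhalf k))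
  let U : F →L[𝕂] lp (fun k => G k) ∞ := U₀.mkContinuous 1 hU₀bound
  have hUapp : ∀ (y : F) (k : ℕ), (U y : ∀ k, G k) k = ((c k : 𝕂)) • u k y := fun y k => rfl
  -- geometric facts
  set q0 : ℝ := (1/2 : ℝ) ^ r with hq0
  have hq0pos : 0 < q0 := Real.rpow_pos_of_pos (by norm_num) r
  have hq0lt : q0 < 1 := Real.rpow_lt_one (by norm_num) (by norm_num) hrpos
  have hq0le : q0 ≤ 1/2 := by
    have h1 : (1/2 : ℝ) ^ r ≤ (1/2 : ℝ) ^ (1 : ℝ) :=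
      Real.rpow_le_rpow_of_exponent_ge (by norm_num) (by norm_num) hr
    rwa [Real.rpow_one] at h1
  have hgeom : ∀ k : ℕ, ((1/2 : ℝ)^k) ^ r = q0 ^ k := by
    intro k
    rw [hq0, ← Real.rpow_natCast (1/2 : ℝ) k, ← Real.rpow_natCast ((1/2 : ℝ) ^ r) k,
      ← Real.rpow_mul (by norm_num : (0:ℝ) ≤ 1/2), ← Real.rpow_mul (by norm_num : (0:ℝ) ≤ 1/2),
      mul_comm]
  have hsum_geo : Summable (fun k : ℕ => q0 ^ k) := summable_geometric_of_lt_one hq0pos.le hq0lt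
  have hgeo_sum : ∑' k : ℕ, q0 ^ k = (1 - q0)⁻¹ := tsum_geometric_of_lt_one hq0pos.le hq0lt
  have hgeo_le : (1 - q0)⁻¹ ≤ 2 := by
    have h1 : (1 - q0)⁻¹ ≤ ((1:ℝ)/2)⁻¹ :=
      inv_anti₀ (by norm_num) (by linarith)
    norm_num at h1
    exact h1
  -- termwise bound
  have hterm : ∀ (z : F) (k : ℕ), (c k)^r * ‖u k z‖^r ≤ q0^k * ‖z‖^r := by
    intro z k
    have h1 : (c k)^r * ‖u k z‖^r = (c k * ‖u k z‖)^r :=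
      (Real.mul_rpow (hcpos k).le (norm_nonneg _)).symm
    have h2 : q0^k * ‖z‖^r = ((1/2 : ℝ)^k * ‖z‖)^r := by
      rw [Real.mul_rpow (pow_nonneg (by norm_num : (0:ℝ) ≤ 1/2) k) (norm_nonneg _), hgeom k]
    rw [h1, h2]
    apply Real.rpow_le_rpow (mul_nonneg (hcpos k).le (norm_nonneg _)) ?_ hrpos.le
    calc c k * ‖u k z‖ ≤ c k * (B k * ‖z‖) := mul_le_mul_of_nonneg_left (hub k z) (hcpos k).le
      _ = (1/2 : ℝ)^k * ‖z‖ := by rw [← mul_assoc, hcB k]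
  have htermnn : ∀ (z : F) (k : ℕ), 0 ≤ (c k)^r * ‖u k z‖^r := fun z k =>
    mul_nonneg (Real.rpow_nonneg (hcpos k).le r) (Real.rpow_nonneg (norm_nonneg _) r)
  have hsummable : ∀ z : F, Summable (fun k => (c k)^r * ‖u k z‖^r) := fun z =>
    Summable.of_nonneg_of_le (htermnn z) (fun k => hterm z k)
      (hsum_geo.mul_right (‖z‖^r))
  -- U is absolutely r-summing
  have habsU : AbsolutelySummingOp 𝕂 r U := by
    refine ⟨2, by norm_num, ?_⟩
    intro m y
    set w := weakLpNorm 𝕂 r y with hwdef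
    have hw0 : 0 ≤ w := weakLpNorm_nonneg_s9 _ _
    have hUj : ∀ j, ‖U (y j)‖ ^ r ≤ ∑' k, (c k)^r * ‖u k (y j)‖^r := by
      intro j
      have hT0 : 0 ≤ ∑' k, (c k)^r * ‖u k (y j)‖^r := tsum_nonneg (htermnn (y j))
      have hUle : ‖U (y j)‖ ≤ (∑' k, (c k)^r * ‖u k (y j)‖^r) ^ (1/r) := by
        apply lp.norm_le_of_forall_le (Real.rpow_nonneg hT0 _)
        intro k
        have h1 : ‖(U (y j) : ∀ k, G k) k‖ ^ r = (c k)^r * ‖u k (y j)‖^r := by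
          rw [hUapp, norm_smul, RCLike.norm_ofReal, abs_of_nonneg (hcpos k).le,
            Real.mul_rpow (hcpos k).le (norm_nonneg _)]
        have h2 : (c k)^r * ‖u k (y j)‖^r ≤ ∑' k, (c k)^r * ‖u k (y j)‖^r :=
          Summable.le_tsum (hsummable (y j)) k (fun m _ => htermnn (y j) m)
        calc ‖(U (y j) : ∀ k, G k) k‖
            = ((‖(U (y j) : ∀ k, G k) k‖ ^ r) ^ (1/r)) := by
              rw [one_div, Real.rpow_rpow_inv (norm_nonneg _) hr0]
          _ ≤ (∑' k, (c k)^r * ‖u k (y j)‖^r) ^ (1/r) :=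
              Real.rpow_le_rpow (Real.rpow_nonneg (norm_nonneg _) r) (h1 ▸ h2) (by positivity)
      calc ‖U (y j)‖ ^ r ≤ ((∑' k, (c k)^r * ‖u k (y j)‖^r) ^ (1/r)) ^ r :=
            Real.rpow_le_rpow (norm_nonneg _) hUle hrpos.le
        _ = ∑' k, (c k)^r * ‖u k (y j)‖^r := by
            rw [one_div, Real.rpow_inv_rpow hT0 hr0]
    have hsum1 : ∑ j, ‖U (y j)‖ ^ r ≤ ∑' k, (c k)^r * (∑ j, ‖u k (y j)‖^r) := by
      calc ∑ j, ‖U (y j)‖ ^ r ≤ ∑ j, ∑' k, (c k)^r * ‖u k (y j)‖^r :=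
            Finset.sum_le_sum fun j _ => hUj j
        _ = ∑' k, ∑ j, (c k)^r * ‖u k (y j)‖^r :=
            (Summable.tsum_finsetSum (fun j _ => hsummable (y j))).symm
        _ = ∑' k, (c k)^r * ∑ j, ‖u k (y j)‖^r :=
            tsum_congr fun k => (Finset.mul_sum _ _ _).symm
    have hsum2 : ∀ k, (c k)^r * (∑ j, ‖u k (y j)‖^r) ≤ q0^k * w^r := by
      intro k
      have hS0 : 0 ≤ ∑ j, ‖u k (y j)‖^r :=
        Finset.sum_nonneg fun _ _ => Real.rpow_nonneg (norm_nonneg _) _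
      have hSle : ∑ j, ‖u k (y j)‖^r ≤ (B k * w)^r := by
        have h1 := (hBmem k).2 m y
        calc ∑ j, ‖u k (y j)‖^r = ((∑ j, ‖u k (y j)‖^r)^(1/r))^r := by
              rw [one_div, Real.rpow_inv_rpow hS0 hr0]
          _ ≤ (B k * w)^r := Real.rpow_le_rpow (Real.rpow_nonneg hS0 _) h1 hrpos.le
      calc (c k)^r * ∑ j, ‖u k (y j)‖^r ≤ (c k)^r * (B k * w)^r :=
            mul_le_mul_of_nonneg_left hSle (Real.rpow_nonneg (hcpos k).le r)
        _ = ((c k * B k) * w)^r := by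
            rw [← Real.mul_rpow (hcpos k).le (mul_nonneg (hBpos k).le hw0), ← mul_assoc]
        _ = q0^k * w^r := by
            rw [hcB k, Real.mul_rpow (pow_nonneg (by norm_num : (0:ℝ) ≤ 1/2) k) hw0, hgeom k]
    have hsummable2 : Summable (fun k => (c k)^r * (∑ j, ‖u k (y j)‖^r)) :=
      Summable.of_nonneg_of_le
        (fun k => mul_nonneg (Real.rpow_nonneg (hcpos k).le r)
          (Finset.sum_nonneg fun _ _ => Real.rpow_nonneg (norm_nonneg _) _))
        hsum2 (hsum_geo.mul_right (w^r))
    have hsum3 : ∑' k, (c k)^r * (∑ j, ‖u k (y j)‖^r) ≤ ∑' k, q0^k * w^r :=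
      Summable.tsum_le_tsum hsum2 hsummable2 (hsum_geo.mul_right (w^r))
    have hsum4 : ∑' k : ℕ, q0^k * w^r = (1 - q0)⁻¹ * w^r := by
      rw [tsum_mul_right, hgeo_sum]
    have hfinal : ∑ j, ‖U (y j)‖ ^ r ≤ 2 * w^r := by
      have h5 : (1 - q0)⁻¹ * w^r ≤ 2 * w^r :=
        mul_le_mul_of_nonneg_right hgeo_le (Real.rpow_nonneg hw0 _)
      calc ∑ j, ‖U (y j)‖ ^ r ≤ ∑' k, (c k)^r * (∑ j, ‖u k (y j)‖^r) := hsum1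
        _ ≤ ∑' k, q0^k * w^r := hsum3
        _ = (1 - q0)⁻¹ * w^r := hsum4
        _ ≤ 2 * w^r := h5
    have h2r : (2:ℝ)^((1:ℝ)/r) ≤ 2 := by
      have h1 : (2:ℝ)^((1:ℝ)/r) ≤ (2:ℝ)^(1:ℝ) :=
        Real.rpow_le_rpow_of_exponent_le one_le_two
          (by rw [div_le_one hrpos]; exact hr)
      rwa [Real.rpow_one] at h1
    calc (∑ j, ‖U (y j)‖ ^ r) ^ (1/r) ≤ (2 * w^r) ^ (1/r) :=
          Real.rpow_le_rpow
            (Finset.sum_nonneg fun _ _ => Real.rpow_nonneg (norm_nonneg _) _)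
            hfinal (by positivity)
      _ = (2:ℝ)^((1:ℝ)/r) * w := by
          rw [Real.mul_rpow (by norm_num) (Real.rpow_nonneg hw0 _), one_div,
            Real.rpow_rpow_inv hw0 hr0, ← one_div]
      _ ≤ 2 * w := mul_le_mul_of_nonneg_right h2r hw0
  -- apply the hypothesis to U
  have hMS := h (lp (fun k => G k) ∞) U habsU
  obtain ⟨C₀, hC₀0, hC₀⟩ := id hMS
  have masU_le : masNorm 𝕂 p p' (fun x => U (A x)) ≤ C₀ :=
    masNorm_le_of_adm hC₀0 hC₀
  -- transfer the masNorm lower bound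
  have key2 : ∀ k, c k * masNorm 𝕂 p p' (fun x => (u k) (A x)) ≤
      masNorm 𝕂 p p' (fun x => U (A x)) := by
    intro k
    apply le_masNorm hMS
    intro C' hC'0 hC'adm
    have hk : masNorm 𝕂 p p' (fun x => (u k) (A x)) ≤ C' / c k := by
      apply masNorm_le_of_adm (div_nonneg hC'0 (hcpos k).le)
      intro m x
      have hco : ∀ z, ‖u k (A z)‖ ≤ (c k)⁻¹ * ‖U (A z)‖ := by
        intro z
        have h1 : c k * ‖u k (A z)‖ = ‖(U (A z) : ∀ k, G k) k‖ := by
          rw [hUapp, norm_smul, RCLike.norm_ofReal, abs_of_nonneg (hcpos k).le]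
        have h2 : ‖(U (A z) : ∀ k, G k) k‖ ≤ ‖U (A z)‖ :=
          lp.norm_apply_le_norm ENNReal.top_ne_zero _ k
        have h3 : c k * ‖u k (A z)‖ ≤ ‖U (A z)‖ := h1 ▸ h2
        calc ‖u k (A z)‖ = (c k)⁻¹ * (c k * ‖u k (A z)‖) := by
              rw [← mul_assoc, inv_mul_cancel₀ (hcpos k).ne', one_mul]
          _ ≤ (c k)⁻¹ * ‖U (A z)‖ :=
              mul_le_mul_of_nonneg_left h3 (inv_nonneg.mpr (hcpos k).le)
      have hsum : ∑ j : Fin n → Fin m, ‖u k (A fun i => x i (j i))‖ ^ p ≤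
          ((c k)⁻¹)^p * ∑ j : Fin n → Fin m, ‖U (A fun i => x i (j i))‖ ^ p := by
        rw [Finset.mul_sum]
        apply Finset.sum_le_sum
        intro j _
        calc ‖u k (A fun i => x i (j i))‖ ^ p
            ≤ ((c k)⁻¹ * ‖U (A fun i => x i (j i))‖)^p :=
              Real.rpow_le_rpow (norm_nonneg _) (hco _) hppos.le
          _ = ((c k)⁻¹)^p * ‖U (A fun i => x i (j i))‖^p :=
              Real.mul_rpow (inv_nonneg.mpr (hcpos k).le) (norm_nonneg _)
      calc (∑ j : Fin n → Fin m, ‖u k (A fun i => x i (j i))‖ ^ p) ^ (1/p)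
          ≤ (((c k)⁻¹)^p * ∑ j : Fin n → Fin m, ‖U (A fun i => x i (j i))‖ ^ p) ^ (1/p) :=
            Real.rpow_le_rpow
              (Finset.sum_nonneg fun _ _ => Real.rpow_nonneg (norm_nonneg _) _)
              hsum (one_div_nonneg.mpr hppos.le)
        _ = (c k)⁻¹ * (∑ j : Fin n → Fin m, ‖U (A fun i => x i (j i))‖ ^ p) ^ (1/p) := by
            rw [Real.mul_rpow (Real.rpow_nonneg (inv_nonneg.mpr (hcpos k).le) p)
              (Finset.sum_nonneg fun _ _ => Real.rpow_nonneg (norm_nonneg _) _),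
              one_div, Real.rpow_rpow_inv (inv_nonneg.mpr (hcpos k).le) hp0]
        _ ≤ (c k)⁻¹ * (C' * ∏ i, weakLpNorm 𝕂 (p' i) (x i)) :=
            mul_le_mul_of_nonneg_left (hC'adm m x) (inv_nonneg.mpr (hcpos k).le)
        _ = C' / c k * ∏ i, weakLpNorm 𝕂 (p' i) (x i) := by
            rw [div_eq_inv_mul]; ring
    calc c k * masNorm 𝕂 p p' (fun x => (u k) (A x)) ≤ c k * (C' / c k) :=
          mul_le_mul_of_nonneg_left hk (hcpos k).le
      _ = C' := by rw [mul_comm, div_mul_cancel₀ _ (hcpos k).ne']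
  -- derive the contradiction
  have hfin : ∀ k : ℕ, (2:ℝ)^k < 2 * C₀ := by
    intro k
    have h1 := hlt k
    have h2 : c k * ((4:ℝ)^k * piNorm 𝕂 r (u k)) <
        c k * masNorm 𝕂 p p' (fun x => (u k) (A x)) :=
      mul_lt_mul_of_pos_left h1 (hcpos k)
    have h5 : B k / 2 < piNorm 𝕂 r (u k) := by linarith [hBlt2 k]
    have h6 : c k * ((4:ℝ)^k * (B k / 2)) ≤ c k * ((4:ℝ)^k * piNorm 𝕂 r (u k)) := by
      apply mul_le_mul_of_nonneg_left _ (hcpos k).le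
      exact mul_le_mul_of_nonneg_left h5.le (by positivity)
    have h7 : c k * ((4:ℝ)^k * (B k / 2)) = (2:ℝ)^k / 2 := by
      calc c k * ((4:ℝ)^k * (B k / 2)) = (c k * B k) * (4:ℝ)^k / 2 := by ring
        _ = (1/2 : ℝ)^k * (4:ℝ)^k / 2 := by rw [hcB k]
        _ = (2:ℝ)^k / 2 := by rw [← mul_pow]; norm_num
    have h8 := key2 k
    linarith [masU_le]
  obtain ⟨k, hk⟩ := pow_unbounded_of_one_lt (2 * C₀) (one_lt_two (α := ℝ))
  exact absurd (hfin k) (not_lt.2 hk.le)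
end
end
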